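/- Let k be a positive integer and set n = 3k. Let u_1 = (1, 0), u_2 = (−1/2, √3/2), u_3 = (−1/2, −√3/2) in ℝ², and let v_1 = ⋯ = v_k = u_1, v_{k+1} = ⋯ = v_{2k} = u_2, v_{2k+1} = ⋯ = v_{3k} = u_3. Then for every choice of signs ε_1, …, ε_n ∈ {−1, 1}, one has ‖ε_1 v_1 + ⋯ + ε_n v_n‖₂ ≤ √2 if and only if ε_1 + ⋯ + ε_k = ε_{k+1} + ⋯ + ε_{2k} = ε_{2k+1} + ⋯ + ε_{3k}. -/

import Mathlib

/-- The vertices of an equilateral triangle inscribed in the unit circle of `ℝ²`. -/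
noncomputable def u₁ : EuclideanSpace ℝ (Fin 2) :=
  (WithLp.equiv 2 (Fin 2 → ℝ)).symm ![1, 0]

noncomputable def u₂ : EuclideanSpace ℝ (Fin 2) :=
  (WithLp.equiv 2 (Fin 2 → ℝ)).symm ![-1 / 2, Real.sqrt 3 / 2]

noncomputable def u₃ : EuclideanSpace ℝ (Fin 2) :=
  (WithLp.equiv 2 (Fin 2 → ℝ)).symm ![-1 / 2, -(Real.sqrt 3 / 2)]

lemma sum_pm_eq {n : ℕ} (ε : Fin n → ℝ) (hε : ∀ i, ε i = 1 ∨ ε i = -1)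
    (S : Finset (Fin n)) :
    ∑ i ∈ S, ε i = (S.card : ℝ) - 2 * (S.filter (fun i => ε i = -1)).card := by
  have h1 : ∑ i ∈ S, ε i = ∑ i ∈ S, ((1 : ℝ) - 2 * (if ε i = -1 then 1 else 0)) := by
    apply Finset.sum_congr rfl
    intro i _
    rcases hε i with h | h <;> rw [h] <;> norm_num
  rw [h1, Finset.sum_sub_distrib, ← Finset.mul_sum, Finset.sum_boole, Finset.sum_const]
  simp

lemma card_filter_ico (n a b : ℕ) (hb : b ≤ n) :
    (Finset.univ.filter fun i : Fin n => a ≤ (i : ℕ) ∧ (i : ℕ) < b).card = b - a := by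
  have : (Finset.univ.filter fun i : Fin n => a ≤ (i : ℕ) ∧ (i : ℕ) < b) =
      (Finset.Ico a b).attachFin (fun m hm => lt_of_lt_of_le (Finset.mem_Ico.mp hm).2 hb) := by
    ext i
    simp [Finset.mem_attachFin, Finset.mem_Ico]
  rw [this, Finset.card_attachFin, Nat.card_Ico]

theorem triangle_norm_le_sqrt_two_iff (k : ℕ) (hk : 0 < k)
    (ε : Fin (3 * k) → ℝ) (hε : ∀ i, ε i = 1 ∨ ε i = -1) :
    ‖∑ i : Fin (3 * k), ε i •
        (if (i : ℕ) < k then u₁ else if (i : ℕ) < 2 * k then u₂ else u₃)‖ ≤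
      Real.sqrt 2 ↔
    ((∑ i ∈ Finset.univ.filter (fun i : Fin (3 * k) => (i : ℕ) < k), ε i) =
        (∑ i ∈ Finset.univ.filter
            (fun i : Fin (3 * k) => k ≤ (i : ℕ) ∧ (i : ℕ) < 2 * k), ε i) ∧
      (∑ i ∈ Finset.univ.filter
          (fun i : Fin (3 * k) => k ≤ (i : ℕ) ∧ (i : ℕ) < 2 * k), ε i) =
        (∑ i ∈ Finset.univ.filter (fun i : Fin (3 * k) => 2 * k ≤ (i : ℕ)), ε i)) := by
  classical
  set A := Finset.univ.filter (fun i : Fin (3 * k) => (i : ℕ) < k) with hA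
  set B := Finset.univ.filter (fun i : Fin (3 * k) => k ≤ (i : ℕ) ∧ (i : ℕ) < 2 * k) with hB
  set C := Finset.univ.filter (fun i : Fin (3 * k) => 2 * k ≤ (i : ℕ)) with hC
  set a := ∑ i ∈ A, ε i with ha
  set b := ∑ i ∈ B, ε i with hb
  set c := ∑ i ∈ C, ε i with hc
  -- the vector equals a • u₁ + b • u₂ + c • u₃
  have hsum : (∑ i : Fin (3 * k), ε i •
      (if (i : ℕ) < k then u₁ else if (i : ℕ) < 2 * k then u₂ else u₃)) =
      a • u₁ + b • u₂ + c • u₃ := by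
    have key : ∀ i : Fin (3 * k), ε i •
        (if (i : ℕ) < k then u₁ else if (i : ℕ) < 2 * k then u₂ else u₃) =
        (if (i : ℕ) < k then ε i • u₁ else if (i : ℕ) < 2 * k then ε i • u₂ else ε i • u₃) := by
      intro i
      split_ifs <;> rfl
    have eB : Finset.filter (fun x : Fin (3 * k) => (x : ℕ) < 2 * k)
        (Finset.filter (fun x : Fin (3 * k) => ¬(x : ℕ) < k) Finset.univ) = B := by
      ext i
      simp only [hB, Finset.mem_filter, Finset.mem_univ, true_and]
      omega
    have eC : Finset.filter (fun x : Fin (3 * k) => ¬(x : ℕ) < 2 * k)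
        (Finset.filter (fun x : Fin (3 * k) => ¬(x : ℕ) < k) Finset.univ) = C := by
      ext i
      simp only [hC, Finset.mem_filter, Finset.mem_univ, true_and]
      omega
    rw [Finset.sum_congr rfl (fun i _ => key i), Finset.sum_ite, Finset.sum_ite,
      eB, eC, ← Finset.sum_smul, ← Finset.sum_smul, ← Finset.sum_smul]
    exact (add_assoc _ _ _).symm
  rw [hsum]
  -- component computation
  have h0 : (a • u₁ + b • u₂ + c • u₃) 0 = a - b / 2 - c / 2 := by
    simp [u₁, u₂, u₃, WithLp.equiv_symm_apply, PiLp.toLp_apply]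
    ring
  have h1 : (a • u₁ + b • u₂ + c • u₃) 1 = (b - c) * (Real.sqrt 3 / 2) := by
    simp [u₁, u₂, u₃, WithLp.equiv_symm_apply, PiLp.toLp_apply]
    ring
  have hnorm : ‖a • u₁ + b • u₂ + c • u₃‖ =
      Real.sqrt ((a - b / 2 - c / 2) ^ 2 + 3 / 4 * (b - c) ^ 2) := by
    rw [EuclideanSpace.norm_eq]
    congr 1
    rw [Fin.sum_univ_two, h0, h1]
    have h3 : Real.sqrt 3 ^ 2 = 3 := Real.sq_sqrt (by norm_num)
    rw [Real.norm_eq_abs, Real.norm_eq_abs, sq_abs, sq_abs]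
    nlinarith [h3]
  rw [hnorm]
  have hiff : Real.sqrt ((a - b / 2 - c / 2) ^ 2 + 3 / 4 * (b - c) ^ 2) ≤ Real.sqrt 2 ↔
      (a - b / 2 - c / 2) ^ 2 + 3 / 4 * (b - c) ^ 2 ≤ 2 :=
    Real.sqrt_le_sqrt_iff (by positivity)
  rw [hiff]
  -- parity facts
  have hcardA : A.card = k := by
    have e : A = Finset.univ.filter (fun i : Fin (3 * k) => 0 ≤ (i : ℕ) ∧ (i : ℕ) < k) := by
      rw [hA]; apply Finset.filter_congr; intro i _; simp
    rw [e, card_filter_ico (3 * k) 0 k (by omega)]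
    omega
  have hcardB : B.card = k := by
    have := card_filter_ico (3 * k) k (2 * k) (by omega)
    rw [hB, this]
    omega
  have hcardC : C.card = k := by
    have : C = Finset.univ.filter (fun i : Fin (3 * k) => 2 * k ≤ (i : ℕ) ∧ (i : ℕ) < 3 * k) := by
      rw [hC]
      apply Finset.filter_congr
      intro i _
      simp [i.isLt]
    rw [this, card_filter_ico (3 * k) (2 * k) (3 * k) le_rfl]
    omega
  obtain ⟨ma, hma⟩ : ∃ m : ℕ, a = (k : ℝ) - 2 * m :=
    ⟨_, by rw [ha, sum_pm_eq ε hε A, hcardA]⟩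
  obtain ⟨mb, hmb⟩ : ∃ m : ℕ, b = (k : ℝ) - 2 * m :=
    ⟨_, by rw [hb, sum_pm_eq ε hε B, hcardB]⟩
  obtain ⟨mc, hmc⟩ : ∃ m : ℕ, c = (k : ℝ) - 2 * m :=
    ⟨_, by rw [hc, sum_pm_eq ε hε C, hcardC]⟩
  constructor
  · intro h
    have hbc : b = c := by
      have h2 : ((mb : ℝ) - mc) ^ 2 ≤ 2 / 3 := by nlinarith
      have h3 : ((mb : ℤ) - mc : ℤ) ^ 2 ≤ 0 := by
        by_contra hcon
        push_neg at hcon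
        have : (1 : ℤ) ≤ ((mb : ℤ) - mc) ^ 2 := hcon
        have : (1 : ℝ) ≤ ((mb : ℝ) - mc) ^ 2 := by exact_mod_cast this
        linarith
      have h4 : ((mb : ℤ) - mc : ℤ) = 0 :=
        pow_eq_zero_iff (by norm_num) |>.mp (le_antisymm h3 (sq_nonneg _))
      have : (mb : ℝ) = mc := by exact_mod_cast sub_eq_zero.mp h4
      rw [hmb, hmc, this]
    have hab : a = b := by
      rw [hbc] at h
      have h2 : ((ma : ℝ) - mc) ^ 2 ≤ 1 / 2 := by nlinarith
      have h3 : ((ma : ℤ) - mc : ℤ) ^ 2 ≤ 0 := by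
        by_contra hcon
        push_neg at hcon
        have : (1 : ℤ) ≤ ((ma : ℤ) - mc) ^ 2 := hcon
        have : (1 : ℝ) ≤ ((ma : ℝ) - mc) ^ 2 := by exact_mod_cast this
        linarith
      have h4 : ((ma : ℤ) - mc : ℤ) = 0 :=
        pow_eq_zero_iff (by norm_num) |>.mp (le_antisymm h3 (sq_nonneg _))
      have : (ma : ℝ) = mc := by exact_mod_cast sub_eq_zero.mp h4
      rw [hma, this, hbc, hmc]
    exact ⟨hab, hbc⟩
  · rintro ⟨hab, hbc⟩
    rw [hab, hbc]
    have : (c - c / 2 - c / 2) ^ 2 + 3 / 4 * (c - c) ^ 2 = 0 := by ring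
    linarith
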